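/- arXiv:1706.10209 — 4 statements merged into one kernel-verified Lean document; each statement's English description precedes it below -/
import Mathlib

section
/- Let K = n, M = n^α with 0 < α < 1/2, δ = (1−α)/3, and suppose a node's cache is a uniformly random multiset of size M from K files. Then for every 1 ≤ s ≤ δM, the probability that the cache has exactly s distinct files is at most (2 n^{α+δ−1})^M ≤ (2 n^{−1/3})^M. -/
lemma aux_pow_le_choose : ∀ k n : ℕ, k ≤ n → n ^ k ≤ n.choose k * k ^ k := by
  intro k
  induction k with
  | zero => simp
  | succ k ih =>
    intro n hk
    obtain ⟨m, rfl⟩ : ∃ m, n = m + 1 := ⟨n - 1, by omega⟩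
    have h1 : (m+1) * m.choose k = (m+1).choose (k+1) * (k+1) := Nat.add_one_mul_choose_eq m k
    have ih' := ih m (by omega)
    have hkk : 0 < k ^ k := by
      rcases Nat.eq_zero_or_pos k with h | h
      · subst h; simp
      · exact pow_pos h k
    apply Nat.le_of_mul_le_mul_right _ hkk
    calc (m+1)^(k+1) * k^k = (m+1) * ((m+1)*k)^k := by rw [mul_pow]; ring
      _ ≤ (m+1) * (m*(k+1))^k := by
        refine Nat.mul_le_mul_left _ (Nat.pow_le_pow_left ?_ k)
        nlinarith
      _ = (m+1) * m^k * (k+1)^k := by rw [mul_pow]; ring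
      _ ≤ (m+1) * (m.choose k * k^k) * (k+1)^k := by
        refine Nat.mul_le_mul_right _ (Nat.mul_le_mul_left _ ih')
      _ = ((m+1) * m.choose k) * (k+1)^k * k^k := by ring
      _ = ((m+1).choose (k+1) * (k+1)^(k+1)) * k^k := by rw [h1]; ring

lemma aux_choose_le_two_pow (m k : ℕ) : m.choose k ≤ 2 ^ m := by
  rcases le_or_gt k m with h | h
  · calc m.choose k ≤ ∑ i ∈ Finset.range (m+1), m.choose i :=
        Finset.single_le_sum (fun i _ => Nat.zero_le _) (Finset.mem_range.mpr (by omega))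
      _ = 2 ^ m := Nat.sum_range_choose m
  · simp [Nat.choose_eq_zero_of_lt h]

open Real in
/-- With `K = n`, `M = n^α` (`0 < α < 1/2`), `δ = (1-α)/3`, for a uniformly random
size-`M` multiset cache from `n` files and every `1 ≤ s ≤ δM`, the probability of
having exactly `s` distinct files, `C(n,s)·C(M-1,M-s)/C(n+M-1,M)`, is at most
`(2 n^{α+δ-1})^M ≤ (2 n^{-1/3})^M`. -/
theorem stmt_6 (n M s : ℕ) (α δ : ℝ) (hn : 1 ≤ n) (hα : 0 < α) (hα' : α < 1 / 2)
    (hM : (M : ℝ) = (n : ℝ) ^ α) (hδ : δ = (1 - α) / 3)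
    (hs : 1 ≤ s) (hsM : (s : ℝ) ≤ δ * M) :
    ((n.choose s * (M - 1).choose (M - s) : ℝ) / ((n + M - 1).choose M : ℝ)
        ≤ (2 * (n : ℝ) ^ (α + δ - 1)) ^ M) ∧
      (2 * (n : ℝ) ^ (α + δ - 1)) ^ M ≤ (2 * (n : ℝ) ^ (-(1 / 3) : ℝ)) ^ M := by
  have hx1 : (1 : ℝ) ≤ (n : ℝ) := by exact_mod_cast hn
  have hx0 : (0 : ℝ) < (n : ℝ) := lt_of_lt_of_le one_pos hx1
  have hM1R : (1 : ℝ) ≤ (M : ℝ) := by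
    rw [hM]; exact Real.one_le_rpow hx1 hα.le
  have hM1 : 1 ≤ M := by exact_mod_cast hM1R
  have hMn : M ≤ n := by
    have : (M : ℝ) ≤ (n : ℝ) := by
      rw [hM]
      calc (n : ℝ) ^ α ≤ (n : ℝ) ^ (1 : ℝ) := Real.rpow_le_rpow_of_exponent_le hx1 (by linarith)
        _ = (n : ℝ) := Real.rpow_one _
    exact_mod_cast this
  constructor
  · -- first inequality
    have hD : (0 : ℝ) < ((n + M - 1).choose M : ℝ) := by
      have : 0 < (n + M - 1).choose M := Nat.choose_pos (by omega)
      exact_mod_cast this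
    have hden : (n : ℝ) ^ (M : ℕ) ≤ ((n + M - 1).choose M : ℝ) * (M : ℝ) ^ (M : ℕ) := by
      have h1 : n ^ M ≤ n.choose M * M ^ M := aux_pow_le_choose M n hMn
      have h2 : n.choose M ≤ (n + M - 1).choose M :=
        Nat.choose_le_choose M (by omega)
      have : n ^ M ≤ (n + M - 1).choose M * M ^ M :=
        h1.trans (Nat.mul_le_mul_right _ h2)
      exact_mod_cast this
    have hnum : ((n.choose s : ℝ) * ((M - 1).choose (M - s) : ℝ)) ≤
        (n : ℝ) ^ (s : ℕ) * 2 ^ (M : ℕ) := by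
      have h1 : n.choose s ≤ n ^ s := Nat.choose_le_pow n s
      have h2 : (M - 1).choose (M - s) ≤ 2 ^ M := by
        calc (M - 1).choose (M - s) ≤ 2 ^ (M - 1) := aux_choose_le_two_pow _ _
          _ ≤ 2 ^ M := Nat.pow_le_pow_right (by norm_num) (by omega)
      have := Nat.mul_le_mul h1 h2
      exact_mod_cast this
    have hxs : (n : ℝ) ^ (s : ℕ) = (n : ℝ) ^ ((s : ℕ) : ℝ) := (Real.rpow_natCast _ s).symm
    have hxM : (n : ℝ) ^ (M : ℕ) = (n : ℝ) ^ ((M : ℕ) : ℝ) := (Real.rpow_natCast _ M).symm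
    have hMM : (M : ℝ) ^ (M : ℕ) = (n : ℝ) ^ (α * M) := by
      conv_lhs => rw [hM]
      rw [← Real.rpow_natCast ((n : ℝ) ^ α) M, ← Real.rpow_mul hx0.le]
    have hR : (2 * (n : ℝ) ^ (α + δ - 1)) ^ (M : ℕ) =
        2 ^ (M : ℕ) * (n : ℝ) ^ ((α + δ - 1) * M) := by
      rw [mul_pow, ← Real.rpow_natCast ((n : ℝ) ^ (α + δ - 1)) M, ← Real.rpow_mul hx0.le]
    have hkey : (n : ℝ) ^ ((s : ℕ) : ℝ) * 2 ^ (M : ℕ) * (n : ℝ) ^ (α * M) ≤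
        (2 ^ (M : ℕ) * (n : ℝ) ^ ((α + δ - 1) * M)) * (n : ℝ) ^ ((M : ℕ) : ℝ) := by
      have h2 : (0 : ℝ) ≤ 2 ^ (M : ℕ) := by positivity
      have hcore : (n : ℝ) ^ ((s : ℕ) : ℝ) * (n : ℝ) ^ (α * M) ≤
          (n : ℝ) ^ ((α + δ - 1) * M) * (n : ℝ) ^ ((M : ℕ) : ℝ) := by
        rw [← Real.rpow_add hx0, ← Real.rpow_add hx0]
        exact Real.rpow_le_rpow_of_exponent_le hx1 (by linarith)
      calc (n : ℝ) ^ ((s : ℕ) : ℝ) * 2 ^ (M : ℕ) * (n : ℝ) ^ (α * M)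
          = 2 ^ (M : ℕ) * ((n : ℝ) ^ ((s : ℕ) : ℝ) * (n : ℝ) ^ (α * M)) := by ring
        _ ≤ 2 ^ (M : ℕ) * ((n : ℝ) ^ ((α + δ - 1) * M) * (n : ℝ) ^ ((M : ℕ) : ℝ)) :=
            mul_le_mul_of_nonneg_left hcore h2
        _ = (2 ^ (M : ℕ) * (n : ℝ) ^ ((α + δ - 1) * M)) * (n : ℝ) ^ ((M : ℕ) : ℝ) := by ring
    rw [div_le_iff₀ hD]
    refine hnum.trans ?_
    have hMMpos : (0 : ℝ) < (M : ℝ) ^ (M : ℕ) := by positivity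
    refine le_of_mul_le_mul_right ?_ hMMpos
    have hR0 : (0 : ℝ) ≤ (2 * (n : ℝ) ^ (α + δ - 1)) ^ (M : ℕ) := by positivity
    calc (n : ℝ) ^ (s : ℕ) * 2 ^ (M : ℕ) * (M : ℝ) ^ (M : ℕ)
        = (n : ℝ) ^ ((s : ℕ) : ℝ) * 2 ^ (M : ℕ) * (n : ℝ) ^ (α * M) := by rw [hxs, hMM]
      _ ≤ (2 ^ (M : ℕ) * (n : ℝ) ^ ((α + δ - 1) * M)) * (n : ℝ) ^ ((M : ℕ) : ℝ) := hkey
      _ = (2 * (n : ℝ) ^ (α + δ - 1)) ^ (M : ℕ) * (n : ℝ) ^ (M : ℕ) := by rw [hR, hxM]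
      _ ≤ (2 * (n : ℝ) ^ (α + δ - 1)) ^ (M : ℕ) *
            (((n + M - 1).choose M : ℝ) * (M : ℝ) ^ (M : ℕ)) :=
          mul_le_mul_of_nonneg_left hden hR0
      _ = (2 * (n : ℝ) ^ (α + δ - 1)) ^ (M : ℕ) * ((n + M - 1).choose M : ℝ)
            * (M : ℝ) ^ (M : ℕ) := by ring
  · -- second inequality
    apply pow_le_pow_left₀ (by positivity)
    have : (n : ℝ) ^ (α + δ - 1) ≤ (n : ℝ) ^ (-(1 / 3) : ℝ) :=
      Real.rpow_le_rpow_of_exponent_le hx1 (by rw [hδ] at *; linarith)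
    linarith
end

section
/- Under the uniform popularity distribution p_j = 1/K and with the communication cost formula C = ∑_{j=1}^K p_j / √(1 − (1 − p_j)^M), if M = o(K) and M ≥ 1, then C = Θ(√(K/M)). -/
/-!
Each term of the sum is the same, so the cost is `1 / √(1 - (1 - 1/K)^M)`. With `t = M/K ≤ 1`,
Bernoulli's inequality and `(1 - 1/K)^M ≤ exp (-t) ≤ 1 - t/2` pin `1 - (1 - 1/K)^M` between `t/2`
and `t`, so the cost lies between `√(K/M)` and `√2 · √(K/M)`.
-/

open Filter

namespace Real

lemma exp_neg_le_one_sub_half {t : ℝ} (ht0 : 0 ≤ t) (ht1 : t ≤ 1) : exp (-t) ≤ 1 - t / 2 := by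
  have hprod : exp (-t) * (1 + t) ≤ 1 := by
    calc exp (-t) * (1 + t) ≤ exp (-t) * exp t := by
          gcongr; linarith [add_one_le_exp t]
      _ = 1 := by rw [← exp_add, neg_add_cancel, exp_zero]
  -- `(1 - t/2)(1 + t) = 1 + t(1 - t)/2 ≥ 1`
  nlinarith [mul_nonneg ht0 (sub_nonneg.2 ht1)]

end Real

lemma one_sub_one_sub_pow_le (x : ℝ) (hx : x ≤ 2) (n : ℕ) : 1 - (1 - x) ^ n ≤ n * x := by
  have := one_add_mul_le_pow (a := -x) (by linarith) n
  rw [← sub_eq_add_neg] at this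
  linarith

lemma half_mul_le_one_sub_one_sub_pow {x : ℝ} (hx0 : 0 ≤ x) (hx1 : x ≤ 1) {n : ℕ}
    (hnx : n * x ≤ 1) :
    n * x / 2 ≤ 1 - (1 - x) ^ n := by
  have : (1 - x) ^ n ≤ Real.exp (-(n * x)) := by
    calc (1 - x) ^ n ≤ Real.exp (-x) ^ n := by
          gcongr; linarith [Real.add_one_le_exp (-x)]
      _ = Real.exp (-(n * x)) := by rw [← Real.exp_nat_mul, mul_neg]
  linarith [Real.exp_neg_le_one_sub_half (by positivity) hnx]

lemma sqrt_inv_le_inv_sqrt {t D : ℝ} (hD : 0 < D) (hDt : D ≤ t) : √t⁻¹ ≤ (√D)⁻¹ := by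
  rw [Real.sqrt_inv]
  exact inv_anti₀ (Real.sqrt_pos.mpr hD) (Real.sqrt_le_sqrt hDt)

lemma inv_sqrt_le_sqrt_two_mul_sqrt_inv {t D : ℝ} (ht : 0 < t) (hD : t / 2 ≤ D) :
    (√D)⁻¹ ≤ √2 * √t⁻¹ := by
  rw [← Real.sqrt_inv, ← Real.sqrt_mul zero_le_two]
  refine Real.sqrt_le_sqrt ?_
  calc D⁻¹ ≤ (t / 2)⁻¹ := inv_anti₀ (by positivity) hD
    _ = 2 * t⁻¹ := by rw [inv_div, div_eq_mul_inv]

lemma sum_Icc_const_inv_div (K : ℕ) (hK : K ≠ 0) (a : ℝ) :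
    ∑ _j ∈ Finset.Icc 1 K, (1 : ℝ) / K / a = 1 / a := by
  rw [Finset.sum_const, Nat.card_Icc, Nat.add_sub_cancel, nsmul_eq_mul]
  field_simp

/-- Under the uniform popularity `p_j = 1/K` and the communication cost formula
`C = ∑_{j=1}^K p_j / √(1 - (1 - p_j)^{M})`, if `1 ≤ M = o(K)` then `C = Θ(√(K/M))`. -/
theorem stmt_10 (M : ℕ → ℕ) (hM : ∀ K, 1 ≤ M K)
    (hMo : Tendsto (fun K : ℕ => (M K : ℝ) / K) atTop (nhds 0)) :
    ∃ c₁ > (0 : ℝ), ∃ c₂ > (0 : ℝ), ∀ᶠ K : ℕ in atTop,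
      c₁ * Real.sqrt ((K : ℝ) / M K) ≤
          (∑ _j ∈ Finset.Icc 1 K,
            ((1 : ℝ) / K) / Real.sqrt (1 - (1 - 1 / (K : ℝ)) ^ M K)) ∧
        (∑ _j ∈ Finset.Icc 1 K,
            ((1 : ℝ) / K) / Real.sqrt (1 - (1 - 1 / (K : ℝ)) ^ M K)) ≤
          c₂ * Real.sqrt ((K : ℝ) / M K) := by
  refine ⟨1, one_pos, √2, by positivity, ?_⟩
  filter_upwards [hMo.eventually_le_const one_pos, eventually_ge_atTop 1] with K ht1 hK
  have hK0 : (0 : ℝ) < K := by exact_mod_cast hK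
  have hM0 : (0 : ℝ) < M K := by exact_mod_cast hM K
  have ht : (M K : ℝ) / K = M K * (1 / K) := by ring
  have hx1 : 1 / (K : ℝ) ≤ 1 := by rw [div_le_one hK0]; exact_mod_cast hK
  have hlower := half_mul_le_one_sub_one_sub_pow (by positivity) hx1 (ht ▸ ht1)
  have hupper := one_sub_one_sub_pow_le (1 / (K : ℝ)) (by linarith) (M K)
  rw [← ht] at hlower hupper
  have htpos : 0 < (M K : ℝ) / K := by positivity
  rw [sum_Icc_const_inv_div K (by omega), ← inv_div (M K : ℝ), one_mul, one_div]
  exact ⟨sqrt_inv_le_inv_sqrt (by linarith) hupper,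
    inv_sqrt_le_sqrt_two_mul_sqrt_inv htpos hlower⟩
end

section
/- Let X₁,…,Xₙ be binary random variables and X₁*,…,Xₙ* mutually independent binary random variables such that for all i and all x₁,…,x_{i−1} ∈ {0,1}, P(Xᵢ = 1 | X₁=x₁,…,X_{i−1}=x_{i−1}) ≥ P(Xᵢ* = 1). Then for all k ≥ 0, P(∑ᵢ Xᵢ ≤ k) ≤ P(∑ᵢ Xᵢ* ≤ k). -/
/-!
Let `T_i = X₀ + ⋯ + X_{i-1}` and `S_i = X*_i + ⋯ + X*_{n-1}`, and let `H_i` be the probability that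
`T_i + S_i ≤ k` when `T_i` and `S_i` are made independent. Then `H_n` and `H_0` are the two sides
of the claim. Passing from `H_i` to `H_{i+1}` replaces the independent coin `X*_i` by `X_i`: the
event only gets harder when a summand is increased, and `X_i` is `1` with probability at least
`P(X*_i = 1)` given any history, hence given `T_i`. So `H_{i+1} ≤ H_i`.
-/

open MeasureTheory ProbabilityTheory Finset ENNReal

section Lintegral

variable {Ω : Type*} [MeasurableSpace Ω] {μ : Measure Ω}

theorem lintegral_comp_eq_tsum {α : Type*} [MeasurableSpace α] [MeasurableSingletonClass α]
    [Countable α] {f : Ω → α} (hf : Measurable f) (φ : α → ℝ≥0∞) :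
    ∫⁻ ω, φ (f ω) ∂μ = ∑' a, φ a * μ (f ⁻¹' {a}) := by
  rw [← lintegral_map (measurable_of_countable φ) hf, lintegral_countable']
  simp only [Measure.map_apply hf (measurableSet_singleton _)]

theorem mul_lintegral_comp_le_setLIntegral {α : Type*} [MeasurableSpace α]
    [MeasurableSingletonClass α] [Countable α] {f : Ω → α} (hf : Measurable f) {s : Set Ω}
    {p : ℝ≥0∞} (hp : ∀ a, p * μ (f ⁻¹' {a}) ≤ μ (s ∩ f ⁻¹' {a}))
    (φ : α → ℝ≥0∞) : p * ∫⁻ ω, φ (f ω) ∂μ ≤ ∫⁻ ω in s, φ (f ω) ∂μ := by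
  rw [lintegral_comp_eq_tsum hf, lintegral_comp_eq_tsum hf, ← ENNReal.tsum_mul_left]
  refine ENNReal.tsum_le_tsum fun a => ?_
  rw [Measure.restrict_apply (hf (measurableSet_singleton a)), Set.inter_comm, mul_left_comm]
  gcongr
  exact hp a

/-- If `Y` is a coin with `P(Y = 1 | T) ≥ p`, then for antitone `G` the value `G (T + Y)` is on
average at most what it is when the coin is replaced by an independent `p`-coin. -/
theorem lintegral_comp_add_le [IsFiniteMeasure μ] {T Y : Ω → ℕ} (hT : Measurable T)
    (hY : Measurable Y) (hYbin : ∀ ω, Y ω = 0 ∨ Y ω = 1) {G : ℕ → ℝ≥0∞} (hG : Antitone G)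
    (hG1 : ∀ t, G t ≤ 1) {p q : ℝ≥0∞} (hpq : p + q = 1)
    (hdom : ∀ φ : ℕ → ℝ≥0∞, p * ∫⁻ ω, φ (T ω) ∂μ ≤ ∫⁻ ω in {ω | Y ω = 1}, φ (T ω) ∂μ) :
    ∫⁻ ω, G (T ω + Y ω) ∂μ ≤ ∫⁻ ω, (p * G (T ω + 1) + q * G (T ω)) ∂μ := by
  set d : ℕ → ℝ≥0∞ := fun t => G t - G (t + 1)
  have hY1 : MeasurableSet {ω | Y ω = 1} := hY (measurableSet_singleton 1)
  have hmeas : ∀ f : ℕ → ℝ≥0∞, Measurable fun ω => f (T ω) := fun f => measurable_from_nat.comp hT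
  have hcoin : ∀ ω, G (T ω + Y ω) + {ω | Y ω = 1}.indicator (fun ω => d (T ω)) ω = G (T ω) := by
    intro ω
    rcases hYbin ω with h | h
    · simp [h]
    · simp [h, d, add_tsub_cancel_of_le (hG (Nat.le_succ (T ω)))]
  have hmix : ∀ t, p * G (t + 1) + q * G t + p * d t = G t := by
    intro t
    rw [add_right_comm, ← mul_add, add_tsub_cancel_of_le (hG (Nat.le_succ t)), ← add_mul, hpq,
      one_mul]
  have hfin : ∫⁻ ω in {ω | Y ω = 1}, d (T ω) ∂μ ≠ ∞ := by
    refine ne_top_of_le_ne_top (measure_ne_top μ {ω | Y ω = 1}) ?_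
    rw [← setLIntegral_one]
    exact lintegral_mono fun ω => tsub_le_self.trans (hG1 _)
  -- Both sides differ from `∫ G (T)` by a multiple of `d (T)`: by `1_{Y = 1}` on the left and
  -- by `p` on the right.
  refine ENNReal.le_of_add_le_add_right hfin ?_
  calc ∫⁻ ω, G (T ω + Y ω) ∂μ + ∫⁻ ω in {ω | Y ω = 1}, d (T ω) ∂μ
      = ∫⁻ ω, G (T ω) ∂μ := by
        have hGTY : Measurable fun ω => G (T ω + Y ω) := measurable_from_nat.comp (hT.add hY)
        rw [← lintegral_indicator hY1, ← lintegral_add_left hGTY]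
        simp only [hcoin]
    _ = ∫⁻ ω, (p * G (T ω + 1) + q * G (T ω)) ∂μ + p * ∫⁻ ω, d (T ω) ∂μ := by
        have hF : Measurable fun ω => p * G (T ω + 1) + q * G (T ω) :=
          hmeas fun t => p * G (t + 1) + q * G t
        rw [← lintegral_const_mul _ (hmeas d), ← lintegral_add_left hF]
        simp only [hmix]
    _ ≤ ∫⁻ ω, (p * G (T ω + 1) + q * G (T ω)) ∂μ + ∫⁻ ω in {ω | Y ω = 1}, d (T ω) ∂μ := by
        gcongr
        exact hdom d

end Lintegral

section Coin

variable {Ω : Type*} [MeasurableSpace Ω] {μ : Measure Ω}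

theorem measure_add_mem_of_indepFun {Y Z : Ω → ℕ} (hY : Measurable Y) (hZ : Measurable Z)
    (hYbin : ∀ ω, Y ω = 0 ∨ Y ω = 1) (hYZ : IndepFun Y Z μ) (A : Set ℕ) :
    μ {ω | Y ω + Z ω ∈ A} =
      μ {ω | Y ω = 1} * μ {ω | Z ω + 1 ∈ A} + μ {ω | Y ω = 0} * μ {ω | Z ω ∈ A} := by
  have hsplit : {ω | Y ω + Z ω ∈ A} =
      (Y ⁻¹' {1} ∩ Z ⁻¹' {z | z + 1 ∈ A}) ∪ (Y ⁻¹' {0} ∩ Z ⁻¹' A) := by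
    ext ω
    rcases hYbin ω with h | h <;> simp [h, add_comm]
  have hdisj : Disjoint (Y ⁻¹' {1} ∩ Z ⁻¹' {z | z + 1 ∈ A}) (Y ⁻¹' {0} ∩ Z ⁻¹' A) :=
    Set.disjoint_left.2 fun ω h₁ h₀ => by simp_all
  rw [hsplit, measure_union hdisj ((hY (measurableSet_singleton 0)).inter (hZ .of_discrete)),
    hYZ.measure_inter_preimage_eq_mul _ _ .of_discrete .of_discrete,
    hYZ.measure_inter_preimage_eq_mul _ _ .of_discrete .of_discrete]
  rfl

theorem measure_eq_one_add_measure_eq_zero [IsProbabilityMeasure μ] {Y : Ω → ℕ}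
    (hY : Measurable Y) (hYbin : ∀ ω, Y ω = 0 ∨ Y ω = 1) :
    μ {ω | Y ω = 1} + μ {ω | Y ω = 0} = 1 := by
  rw [← measure_union (s₁ := {ω | Y ω = 1}) (s₂ := {ω | Y ω = 0})
    (Set.disjoint_left.2 fun ω h₁ h₀ => by simp_all) (hY (measurableSet_singleton 0)),
    ← measure_univ (μ := μ)]
  congr 1
  ext ω
  rcases hYbin ω with h | h <;> simp [h]

end Coin

section PartialSums

variable {Ω : Type*} {n : ℕ}

def partialSum (X : Fin n → Ω → ℕ) (i : ℕ) : Ω → ℕ :=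
  ∑ j ∈ univ.filter (fun j : Fin n => (j : ℕ) < i), X j

def tailSum (X : Fin n → Ω → ℕ) (i : ℕ) : Ω → ℕ :=
  ∑ j ∈ univ.filter (fun j : Fin n => i ≤ (j : ℕ)), X j

def history (X : Fin n → Ω → ℕ) (i : ℕ) (ω : Ω) : Fin n → ℕ :=
  fun j => if (j : ℕ) < i then X j ω else 0

variable {X : Fin n → Ω → ℕ}

theorem partialSum_zero : partialSum X 0 = 0 := by
  simp [partialSum]

theorem partialSum_last : partialSum X n = ∑ j, X j := by
  simp [partialSum]

theorem partialSum_succ {i : ℕ} (hi : i < n) :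
    partialSum X (i + 1) = partialSum X i + X ⟨i, hi⟩ := by
  have : univ.filter (fun j : Fin n => (j : ℕ) < i + 1) =
      insert ⟨i, hi⟩ (univ.filter fun j : Fin n => (j : ℕ) < i) := by
    ext j
    simp only [mem_filter, mem_insert, mem_univ, true_and, Fin.ext_iff]
    omega
  rw [partialSum, this, sum_insert (by simp), add_comm, partialSum]

theorem tailSum_zero : tailSum X 0 = ∑ j, X j := by
  simp [tailSum]

theorem tailSum_last : tailSum X n = 0 := by
  simp [tailSum]

theorem tailSum_eq_add {i : ℕ} (hi : i < n) : tailSum X i = X ⟨i, hi⟩ + tailSum X (i + 1) := by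
  have : univ.filter (fun j : Fin n => i ≤ (j : ℕ)) =
      insert ⟨i, hi⟩ (univ.filter fun j : Fin n => i + 1 ≤ (j : ℕ)) := by
    ext j
    simp only [mem_filter, mem_insert, mem_univ, true_and, Fin.ext_iff]
    omega
  rw [tailSum, this, sum_insert (by simp), tailSum]

theorem partialSum_apply (i : ℕ) (ω : Ω) : partialSum X i ω = ∑ j, history X i ω j := by
  simp [partialSum, history, sum_filter]

variable [MeasurableSpace Ω]

theorem measurable_partialSum (hX : ∀ j, Measurable (X j)) (i : ℕ) :
    Measurable (partialSum X i) := by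
  unfold partialSum; fun_prop

theorem measurable_tailSum (hX : ∀ j, Measurable (X j)) (i : ℕ) : Measurable (tailSum X i) := by
  unfold tailSum; fun_prop

theorem measurable_history (hX : ∀ j, Measurable (X j)) (i : ℕ) :
    Measurable (history X i) := by
  refine measurable_pi_lambda _ fun j => ?_
  by_cases h : (j : ℕ) < i
  · simpa [history, h] using hX j
  · simp [history, h]

end PartialSums

section Hybrid

variable {Ω : Type*} [MeasurableSpace Ω] {μ : Measure Ω} {n : ℕ} {X Xstar : Fin n → Ω → ℕ}

theorem mul_measure_history_le (hXbin : ∀ j ω, X j ω = 0 ∨ X j ω = 1) {I : Fin n} {p : ℝ≥0∞}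
    (hdom : ∀ x : Fin n → ℕ, (∀ j, x j = 0 ∨ x j = 1) →
      p * μ {ω | ∀ j, j < I → X j ω = x j} ≤
        μ ({ω | X I ω = 1} ∩ {ω | ∀ j, j < I → X j ω = x j}))
    (x : Fin n → ℕ) :
    p * μ (history X I ⁻¹' {x}) ≤ μ ({ω | X I ω = 1} ∩ history X I ⁻¹' {x}) := by
  by_cases hx : x ∈ Set.range (history X I)
  · obtain ⟨ω₀, rfl⟩ := hx
    have hpre : history X I ⁻¹' {history X I ω₀} =
        {ω | ∀ j, j < I → X j ω = history X I ω₀ j} := by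
      ext ω
      simp only [Set.mem_preimage, Set.mem_singleton_iff, Set.mem_ofPred_eq, funext_iff, history]
      refine forall_congr' fun j => ?_
      by_cases h : j < I <;> simp [h]
    rw [hpre]
    refine hdom _ fun j => ?_
    by_cases h : (j : ℕ) < I <;> simp [history, h, hXbin]
  · rw [Set.preimage_singleton_eq_empty.2 hx]
    simp

/-- `(μ.prod μ) {(ω, ω') | partialSum X i ω + tailSum Xstar i ω' ≤ k}`, written as an iterated
integral. -/
noncomputable def hybrid (μ : Measure Ω) (X Xstar : Fin n → Ω → ℕ) (k i : ℕ) : ℝ≥0∞ :=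
  ∫⁻ ω, μ {ω' | tailSum Xstar i ω' + partialSum X i ω ≤ k} ∂μ

theorem hybrid_zero [IsProbabilityMeasure μ] (k : ℕ) :
    hybrid μ X Xstar k 0 = μ {ω | ∑ j, Xstar j ω ≤ k} := by
  simp [hybrid, partialSum_zero, tailSum_zero]

theorem hybrid_last [IsProbabilityMeasure μ] (hX : ∀ j, Measurable (X j)) (k : ℕ) :
    hybrid μ X Xstar k n = μ {ω | ∑ j, X j ω ≤ k} := by
  have hset : MeasurableSet {ω | partialSum X n ω ≤ k} :=
    measurable_partialSum hX n (measurableSet_Iic (a := k))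
  have hint : ∀ ω, μ {ω' | tailSum Xstar n ω' + partialSum X n ω ≤ k} =
      {ω | partialSum X n ω ≤ k}.indicator 1 ω := by
    intro ω
    by_cases h : partialSum X n ω ≤ k <;> simp [tailSum_last, h]
  rw [hybrid, lintegral_congr hint, lintegral_indicator_one hset, partialSum_last]
  simp only [Finset.sum_apply]

theorem hybrid_succ_le [IsProbabilityMeasure μ] (hX : ∀ j, Measurable (X j))
    (hXstar : ∀ j, Measurable (Xstar j)) (hXbin : ∀ j ω, X j ω = 0 ∨ X j ω = 1)
    (hXsbin : ∀ j ω, Xstar j ω = 0 ∨ Xstar j ω = 1) (hind : iIndepFun Xstar μ) (k : ℕ)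
    {i : ℕ} (hi : i < n)
    (hdom : ∀ x : Fin n → ℕ, (∀ j, x j = 0 ∨ x j = 1) →
      μ {ω | Xstar ⟨i, hi⟩ ω = 1} * μ {ω | ∀ j, j < ⟨i, hi⟩ → X j ω = x j} ≤
        μ ({ω | X ⟨i, hi⟩ ω = 1} ∩ {ω | ∀ j, j < ⟨i, hi⟩ → X j ω = x j})) :
    hybrid μ X Xstar k (i + 1) ≤ hybrid μ X Xstar k i := by
  set I : Fin n := ⟨i, hi⟩
  set p := μ {ω | Xstar I ω = 1}
  set q := μ {ω | Xstar I ω = 0}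
  set G : ℕ → ℝ≥0∞ := fun t => μ {ω | tailSum Xstar (i + 1) ω + t ≤ k}
  have hG : Antitone G := fun a b hab => measure_mono fun ω (h : _ ≤ k) => (by omega : _ ≤ k)
  have hindep : IndepFun (Xstar I) (tailSum Xstar (i + 1)) μ :=
    (hind.indepFun_finsetSum_of_notMem hXstar (by simp [I])).symm
  have hrec : ∀ t, μ {ω | tailSum Xstar i ω + t ≤ k} = p * G (t + 1) + q * G t := by
    intro t
    have := measure_add_mem_of_indepFun (hXstar I) (measurable_tailSum hXstar (i + 1))
      (hXsbin I) hindep {u | u + t ≤ k}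
    simp only [Set.mem_ofPred_eq, add_right_comm _ 1 t] at this
    simpa only [tailSum_eq_add hi, Pi.add_apply, G, add_assoc] using this
  have hcond : ∀ φ : ℕ → ℝ≥0∞, p * ∫⁻ ω, φ (partialSum X i ω) ∂μ ≤
      ∫⁻ ω in {ω | X I ω = 1}, φ (partialSum X i ω) ∂μ := by
    intro φ
    simp only [partialSum_apply]
    exact mul_lintegral_comp_le_setLIntegral (measurable_history hX i)
      (mul_measure_history_le hXbin hdom) fun x => φ (∑ j, x j)
  calc hybrid μ X Xstar k (i + 1) = ∫⁻ ω, G (partialSum X i ω + X I ω) ∂μ := by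
        rw [hybrid, partialSum_succ hi]
        rfl
    _ ≤ ∫⁻ ω, (p * G (partialSum X i ω + 1) + q * G (partialSum X i ω)) ∂μ :=
        lintegral_comp_add_le (measurable_partialSum hX i) (hX I) (hXbin I) hG
          (fun t => prob_le_one) (measure_eq_one_add_measure_eq_zero (hXstar I) (hXsbin I)) hcond
    _ = hybrid μ X Xstar k i := by
        simp only [hybrid, hrec]

end Hybrid

open MeasureTheory ProbabilityTheory in
/-- Deviation bound for moderate independence: if `X₁,…,Xₙ` are binary random variables,
`X₁*,…,Xₙ*` are mutually independent binary random variables, and for every `i` and every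
history `x₁,…,x_{i-1}` we have `P(Xᵢ = 1 | X₁ = x₁,…,X_{i-1} = x_{i-1}) ≥ P(Xᵢ* = 1)`
(stated multiplicatively), then `P(∑ Xᵢ ≤ k) ≤ P(∑ Xᵢ* ≤ k)` for all `k ≥ 0`. -/
theorem stmt_12 {Ω : Type*} [MeasureSpace Ω] [IsProbabilityMeasure (ℙ : Measure Ω)]
    (n : ℕ) (X Xstar : Fin n → Ω → ℕ)
    (hXmeas : ∀ i, Measurable (X i)) (hXsmeas : ∀ i, Measurable (Xstar i))
    (hXbin : ∀ i ω, X i ω = 0 ∨ X i ω = 1)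
    (hXsbin : ∀ i ω, Xstar i ω = 0 ∨ Xstar i ω = 1)
    (hind : iIndepFun Xstar ℙ)
    (hdom : ∀ i : Fin n, ∀ x : Fin n → ℕ, (∀ j, x j = 0 ∨ x j = 1) →
      ℙ {ω | Xstar i ω = 1} * ℙ {ω | ∀ j, j < i → X j ω = x j} ≤
        ℙ ({ω | X i ω = 1} ∩ {ω | ∀ j, j < i → X j ω = x j})) :
    ∀ k : ℕ, ℙ {ω | ∑ i, X i ω ≤ k} ≤ ℙ {ω | ∑ i, Xstar i ω ≤ k} := by
  intro k
  have hstep : ∀ i (hi : i < n), hybrid ℙ X Xstar k (i + 1) ≤ hybrid ℙ X Xstar k i :=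
    fun i hi => hybrid_succ_le hXmeas hXsmeas hXbin hXsbin hind k hi (hdom ⟨i, hi⟩)
  calc ℙ {ω | ∑ i, X i ω ≤ k} = hybrid ℙ X Xstar k n := (hybrid_last hXmeas k).symm
    _ ≤ hybrid ℙ X Xstar k 0 :=
        Nat.decreasingInduction (motive := fun i _ => hybrid ℙ X Xstar k n ≤ hybrid ℙ X Xstar k i)
          (fun i hi ih => ih.trans (hstep i hi)) le_rfl (Nat.zero_le n)
    _ = ℙ {ω | ∑ i, Xstar i ω ≤ k} := hybrid_zero k
end

section
/- If Z is a Poisson random variable with rate m and k < m is a nonnegative integer, then P(Z ≤ k) ≤ e^{−m} (em)^k / k^k. -/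
/-!
For `i ≤ k ≤ m` we have `k ^ k * m ^ i ≤ m ^ k * k ^ i`, so termwise
`k ^ k * ∑_{i ≤ k} m ^ i / i! ≤ m ^ k * ∑_{i ≤ k} k ^ i / i! ≤ m ^ k * e ^ k`.
Multiplying by `e ^ (-m)` bounds the Poisson lower tail `∑_{i ≤ k} e ^ (-m) m ^ i / i!`.
-/

open Real Finset
open scoped Nat

lemma pow_mul_pow_le_pow_mul_pow {x m : ℝ} (hx : 0 ≤ x) (hxm : x ≤ m) {i n : ℕ} (hin : i ≤ n) :
    x ^ n * m ^ i ≤ m ^ n * x ^ i := by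
  obtain ⟨j, rfl⟩ := Nat.exists_eq_add_of_le hin
  have hm : 0 ≤ m := hx.trans hxm
  have hxj : x ^ j ≤ m ^ j := pow_le_pow_left₀ hx hxm j
  calc x ^ (i + j) * m ^ i = x ^ i * m ^ i * x ^ j := by ring
    _ ≤ x ^ i * m ^ i * m ^ j := by gcongr
    _ = m ^ (i + j) * x ^ i := by ring

lemma pow_mul_sum_range_pow_div_factorial_le {x m : ℝ} (hx : 0 ≤ x) (hxm : x ≤ m) (n : ℕ) :
    x ^ n * ∑ i ∈ range (n + 1), m ^ i / i ! ≤ m ^ n * exp x := by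
  calc x ^ n * ∑ i ∈ range (n + 1), m ^ i / i !
      = ∑ i ∈ range (n + 1), x ^ n * m ^ i / i ! := by
        simp only [mul_sum, mul_div_assoc]
    _ ≤ ∑ i ∈ range (n + 1), m ^ n * x ^ i / i ! := by
        refine sum_le_sum fun i hi ↦ div_le_div_of_nonneg_right ?_ (Nat.cast_nonneg _)
        exact pow_mul_pow_le_pow_mul_pow hx hxm (Nat.lt_succ_iff.mp (mem_range.mp hi))
    _ = m ^ n * ∑ i ∈ range (n + 1), x ^ i / i ! := by
        simp only [mul_sum, mul_div_assoc]
    _ ≤ m ^ n * exp x := by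
        have hm : 0 ≤ m := hx.trans hxm
        gcongr
        exact sum_le_exp_of_nonneg hx _

namespace ProbabilityTheory

lemma poissonMeasure_Iic (r : NNReal) (k : ℕ) :
    poissonMeasure r (Set.Iic k) =
      ENNReal.ofReal (exp (-(r : ℝ)) * ∑ i ∈ range (k + 1), (r : ℝ) ^ i / i !) := by
  rw [mul_sum, ENNReal.ofReal_sum_of_nonneg (fun i _ ↦ by positivity), ← coe_Iic,
    ← Nat.range_succ_eq_Iic, ← MeasureTheory.sum_measure_singleton]
  simp only [poissonMeasure_singleton, mul_div_assoc]

end ProbabilityTheory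

open ProbabilityTheory in
/-- If `Z` is Poisson with rate `m` and `k < m` is a nonnegative integer, then
`P(Z ≤ k) ≤ e^{-m} (em)^k / k^k`. -/
theorem stmt_14 (m : NNReal) (k : ℕ) (hk : (k : ℝ) < (m : ℝ)) :
    poissonMeasure m {i : ℕ | i ≤ k} ≤
      ENNReal.ofReal (Real.exp (-(m : ℝ)) * (Real.exp 1 * (m : ℝ)) ^ k / (k : ℝ) ^ k) := by
  rw [show {i : ℕ | i ≤ k} = Set.Iic k from rfl, poissonMeasure_Iic]
  refine ENNReal.ofReal_le_ofReal ?_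
  have hkk : (0 : ℝ) < (k : ℝ) ^ k := by exact_mod_cast Nat.pow_self_pos
  rw [le_div_iff₀ hkk, mul_pow, ← exp_nat_mul, mul_one, mul_assoc, mul_comm _ ((k : ℝ) ^ k),
    mul_comm (exp k)]
  exact mul_le_mul_of_nonneg_left
    (pow_mul_sum_range_pow_div_factorial_le (Nat.cast_nonneg k) hk.le k) (exp_nonneg _)
end
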